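/- arXiv:1606.07141 — 2 statements merged into one kernel-verified Lean document; each statement's English description precedes it below -/
import Mathlib

section
/- The radial minimum function ubar I is lower semi-continuous on ℝ, satisfies ubar I(|μ|) = 0, is strictly decreasing and convex on [r_min, |μ|], and is strictly increasing on [|μ|, r_max] (where [|μ|, r_max] means [|μ|, ∞) if r_max = ∞). -/
open MeasureTheory Set Filter
open scoped ENNReal NNReal RealInnerProductSpace Topology

noncomputable section

/-- The plane `ℝ²`. -/
abbrev E2 : Type := EuclideanSpace ℝ (Fin 2)

/-- The Laplace transform `𝓛(u) = 𝔼 e^{u·X₁}` of the random vector `X1`. -/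
def lapT {Ω : Type*} [MeasurableSpace Ω] (P : Measure Ω) (X1 : Ω → E2) (u : E2) : ℝ :=
  ∫ ω, Real.exp ⟪u, X1 ω⟫ ∂P

/-- The cumulant generating function `K(u) = log 𝓛(u)`. -/
def cgfT {Ω : Type*} [MeasurableSpace Ω] (P : Measure Ω) (X1 : Ω → E2) (u : E2) : ℝ :=
  Real.log (lapT P X1 u)

/-- The rate function `I = K*`, the Legendre–Fenchel conjugate of `K`.
Since `I ≥ 0` (the value `0 = 0·v - K(0)` is always attained in the supremum),
we may record it as an `ℝ≥0∞`-valued supremum, clamping negatives to `0`. -/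
def rateI {Ω : Type*} [MeasurableSpace Ω] (P : Measure Ω) (X1 : Ω → E2) (v : E2) : ℝ≥0∞ :=
  ⨆ u : E2, ENNReal.ofReal (⟪u, v⟫ - cgfT P X1 u)

/-- The radial minimum function `ubar I (r) = inf_{|ℓ|=1} I(rℓ)`, `+∞` for `r < 0`. -/
def radMin {Ω : Type*} [MeasurableSpace Ω] (P : Measure Ω) (X1 : Ω → E2) (r : ℝ) : ℝ≥0∞ :=
  if r < 0 then ⊤ else ⨅ ℓ ∈ {ℓ : E2 | ‖ℓ‖ = 1}, rateI P X1 (r • ℓ)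

/-- The set of minimal directions `ubar Λ_r = argmin_{|ℓ|=1} I(rℓ)`. -/
def minDirs {Ω : Type*} [MeasurableSpace Ω] (P : Measure Ω) (X1 : Ω → E2) (r : ℝ) : Set E2 :=
  {ℓ : E2 | ‖ℓ‖ = 1 ∧ ∀ ℓ' : E2, ‖ℓ'‖ = 1 → rateI P X1 (r • ℓ) ≤ rateI P X1 (r • ℓ')}

/-- The topological support of a measure on `ℝ²`: the points all of whose open
neighbourhoods have positive measure. -/
def msupp (ν : Measure E2) : Set E2 := {x | ∀ U : Set E2, IsOpen U → x ∈ U → 0 < ν U}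

/-- The mean `μ = 𝔼 X₁`. -/
def meanv {Ω : Type*} [MeasurableSpace Ω] (P : Measure Ω) (X1 : Ω → E2) : E2 :=
  ∫ ω, X1 ω ∂P

/-- `r_min = min { |x| : x ∈ conv (supp X₁) }`. -/
def rmin {Ω : Type*} [MeasurableSpace Ω] (P : Measure Ω) (X1 : Ω → E2) : ℝ :=
  sInf (norm '' (convexHull ℝ (msupp (P.map X1))))

/-- `r_max = max { |x| : x ∈ supp X₁ }`, as an element of `[0,∞]` (possibly `∞`). -/
def rmaxE {Ω : Type*} [MeasurableSpace Ω] (P : Measure Ω) (X1 : Ω → E2) : ℝ≥0∞ :=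
  ⨆ y ∈ msupp (P.map X1), (‖y‖₊ : ℝ≥0∞)

/-- Convexity of an `[0,∞]`-valued function on a subset of `ℝ`. -/
def ENNConvexOn (s : Set ℝ) (g : ℝ → ℝ≥0∞) : Prop :=
  ∀ ⦃x⦄, x ∈ s → ∀ ⦃y⦄, y ∈ s → ∀ a b : ℝ≥0, a + b = 1 →
    g ((a : ℝ) * x + (b : ℝ) * y) ≤ (a : ℝ≥0∞) * g x + (b : ℝ≥0∞) * g y

/-- The largest convex minorant of an `[0,∞]`-valued function on `ℝ`. -/
def convMin (g : ℝ → ℝ≥0∞) (x : ℝ) : ℝ≥0∞ :=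
  ⨆ h ∈ {h : ℝ → ℝ≥0∞ | ENNConvexOn Set.univ h ∧ ∀ y, h y ≤ g y}, h x

/-!
The rate function `I` is convex and lower semicontinuous, vanishes at `μ`, and is positive
elsewhere because `K` has derivative `μ` at `0`. Hence the infimum defining `ubar I(r)` is
attained on the compact circle of radius `r`, and `ubar I` is lower semicontinuous. Pushing a
minimiser `v` of norm `ρ` towards `μ` along the segment `[v, μ]`, convexity of `I` gives
`ubar I(r) ≤ a · I(v)` with `a < 1` for every `r ≠ ρ` between `ρ` and `|μ|`: this yields convexity
below `|μ|` and strict monotonicity on both sides wherever `ubar I(ρ)` is finite.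

Finiteness: a point `(1 - t) w + t μ` with `w ∈ conv (supp X₁)` and `t > 0` is, in every direction
`θ` in which `X₁` is not a.s. constant, strictly exceeded by some support point `x`. A ball around
`x` of positive probability bounds `K` from below on a cone of directions, and compactness of the
unit sphere makes this bound uniform, so `I` is finite there.
-/

open ProbabilityTheory

theorem exists_mem_segment_norm_eq {E : Type*} [SeminormedAddCommGroup E] [NormedSpace ℝ E]
    {x y : E} {r : ℝ} (hr : r ∈ uIcc ‖x‖ ‖y‖) : ∃ z ∈ segment ℝ x y, ‖z‖ = r := by
  have hcont : ContinuousOn (fun t : ℝ => ‖(1 - t) • x + t • y‖) (uIcc 0 1) := by fun_prop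
  obtain ⟨t, ht, htr⟩ := intermediate_value_uIcc hcont (by simpa using hr)
  rw [uIcc_of_le zero_le_one] at ht
  exact ⟨_, segment_eq_image ℝ x y ▸ mem_image_of_mem _ ht, htr⟩

theorem LowerSemicontinuous.iInf_of_compactSpace {α β γ : Type*} [TopologicalSpace α]
    [TopologicalSpace β] [CompactSpace β] [Nonempty β] [CompleteLinearOrder γ] {f : α → β → γ}
    (hf : LowerSemicontinuous (Function.uncurry f)) : LowerSemicontinuous fun a => ⨅ b, f a b := by
  refine lowerSemicontinuous_iff_isClosed_preimage.2 fun y => ?_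
  convert isClosedMap_fst_of_compactSpace _ (hf.isClosed_preimage y) using 1
  ext a
  simp only [mem_preimage, mem_Iic, mem_image, Prod.exists, Function.uncurry_apply_pair,
    exists_and_right, exists_eq_right]
  refine ⟨fun h => ?_, fun ⟨b, hb⟩ => (iInf_le _ b).trans hb⟩
  obtain ⟨b, -, hb⟩ := LowerSemicontinuousOn.exists_isMinOn univ_nonempty isCompact_univ
    ((hf.comp (Continuous.prodMk_right a)).lowerSemicontinuousOn _)
  exact ⟨b, (le_iInf fun b' => hb (mem_univ b')).trans h⟩

theorem IsCompact.exists_forall_le_of_forall_nhdsWithin {X ι : Type*} [TopologicalSpace X]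
    {s : Set X} (hs : IsCompact s) {g : X → ι → ℝ}
    (h : ∀ x ∈ s, ∃ t ∈ 𝓝[s] x, ∃ C, ∀ y ∈ t, ∀ i, g y i ≤ C) :
    ∃ C, ∀ y ∈ s, ∀ i, g y i ≤ C := by
  refine hs.induction_on (p := fun t => ∃ C, ∀ y ∈ t, ∀ i, g y i ≤ C) ⟨0, by simp⟩
    (fun t t' hsub ⟨C, hC⟩ => ⟨C, fun y hy => hC y (hsub hy)⟩) ?_ h
  rintro t t' ⟨C, hC⟩ ⟨C', hC'⟩
  refine ⟨max C C', fun y hy i => ?_⟩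
  rcases hy with hy | hy
  · exact (hC y hy i).trans (le_max_left _ _)
  · exact (hC' y hy i).trans (le_max_right _ _)

theorem msupp_eq_support (ν : Measure E2) : msupp ν = ν.support := by
  rw [Measure.support_eq_forall_isOpen]
  ext x
  exact forall_congr' fun U => ⟨fun h hx hU => h hU hx, fun h hU hx => h hx hU⟩

theorem rmin_nonneg {Ω : Type*} [MeasurableSpace Ω] (P : Measure Ω) (X1 : Ω → E2) :
    0 ≤ rmin P X1 :=
  Real.sInf_nonneg (forall_mem_image.2 fun x _ => norm_nonneg x)

theorem ENNConvexOn.subset {s t : Set ℝ} {g : ℝ → ℝ≥0∞} (hg : ENNConvexOn t g) (hst : s ⊆ t) :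
    ENNConvexOn s g :=
  fun _ hx _ hy => hg (hst hx) (hst hy)

def HasFiniteLaplace {Ω : Type*} [MeasurableSpace Ω] (P : Measure Ω) (X1 : Ω → E2) : Prop :=
  ∀ u : E2, Integrable (fun ω => Real.exp ⟪u, X1 ω⟫) P

section

variable {Ω : Type*} [MeasurableSpace Ω] {P : Measure Ω} {X1 : Ω → E2}

theorem cgfT_smul_eq_cgf (u : E2) (t : ℝ) :
    cgfT P X1 (t • u) = cgf (fun ω => ⟪u, X1 ω⟫) P t := by
  simp only [cgfT, lapT, cgf, mgf, real_inner_smul_left]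

def degenerateSubspace (P : Measure Ω) (X1 : Ω → E2) : Submodule ℝ E2 where
  carrier := {q | ∀ᵐ ω ∂P, ⟪q, X1 ω⟫ = ⟪q, meanv P X1⟫}
  zero_mem' := by simp
  add_mem' := by
    intro a b ha hb
    simp only [mem_ofPred_eq] at ha hb ⊢
    filter_upwards [ha, hb] with ω h₁ h₂
    simp only [inner_add_left, h₁, h₂]
  smul_mem' := by
    intro c q hq
    simp only [mem_ofPred_eq] at hq ⊢
    filter_upwards [hq] with ω h
    simp only [real_inner_smul_left, h]

theorem mem_degenerateSubspace {q : E2} :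
    q ∈ degenerateSubspace P X1 ↔ ∀ᵐ ω ∂P, ⟪q, X1 ω⟫ = ⟪q, meanv P X1⟫ :=
  Iff.rfl

namespace HasFiniteLaplace

variable (hL : HasFiniteLaplace P X1)

include hL

theorem lapT_pos [IsProbabilityMeasure P] (u : E2) : 0 < lapT P X1 u :=
  integral_exp_pos (hL u)

theorem integrableExpSet_inner (u : E2) : integrableExpSet (fun ω => ⟪u, X1 ω⟫) P = univ := by
  ext t
  simpa only [integrableExpSet, mem_ofPred_eq, mem_univ, iff_true, real_inner_smul_left]
    using hL (t • u)

theorem integrable_inner (u : E2) : Integrable (fun ω => ⟪u, X1 ω⟫) P :=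
  integrable_of_mem_interior_integrableExpSet (by simp [hL.integrableExpSet_inner u])

theorem integrable : Integrable X1 P :=
  integrable_piLp_iff.2 fun i => by
    simpa [EuclideanSpace.inner_single_left] using hL.integrable_inner (EuclideanSpace.single i 1)

theorem hasDerivAt_cgfT_smul [IsProbabilityMeasure P] (u : E2) :
    HasDerivAt (fun t : ℝ => cgfT P X1 (t • u)) ⟪u, meanv P X1⟫ 0 := by
  have h0 : (0 : ℝ) ∈ interior (integrableExpSet (fun ω => ⟪u, X1 ω⟫) P) := by
    simp [hL.integrableExpSet_inner u]
  simp_rw [cgfT_smul_eq_cgf]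
  have h := (analyticAt_cgf h0).differentiableAt.hasDerivAt
  rwa [deriv_cgf_zero h0, probReal_univ, div_one, integral_inner hL.integrable] at h

theorem inner_meanv_le_cgfT [IsProbabilityMeasure P] (u : E2) : ⟪u, meanv P X1⟫ ≤ cgfT P X1 u := by
  rw [cgfT, Real.le_log_iff_exp_le (hL.lapT_pos u), lapT, meanv, ← integral_inner hL.integrable]
  exact convexOn_exp.map_integral_le Real.continuous_exp.continuousOn isClosed_univ
    (by simp) (hL.integrable_inner u) (hL u)

theorem ae_mem_msupp : ∀ᵐ ω ∂P, X1 ω ∈ msupp (P.map X1) :=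
  ae_of_ae_map hL.integrable.aemeasurable (msupp_eq_support _ ▸ Measure.support_mem_ae)

theorem msupp_subset {F : Set E2} (hF : IsClosed F) (hae : ∀ᵐ ω ∂P, X1 ω ∈ F) :
    msupp (P.map X1) ⊆ F :=
  msupp_eq_support _ ▸ Measure.support_subset_of_isClosed hF
    ((ae_map_iff hL.integrable.aemeasurable hF.measurableSet).2 hae)

theorem cgfT_add_of_mem_degenerateSubspace [IsProbabilityMeasure P] {q : E2}
    (hq : q ∈ degenerateSubspace P X1) (u : E2) :
    cgfT P X1 (u + q) = cgfT P X1 u + ⟪q, meanv P X1⟫ := by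
  have hlap : lapT P X1 (u + q) = Real.exp ⟪q, meanv P X1⟫ * lapT P X1 u := by
    rw [lapT, lapT, ← integral_const_mul]
    refine integral_congr_ae ?_
    filter_upwards [mem_degenerateSubspace.1 hq] with ω h
    rw [inner_add_left, h, Real.exp_add, mul_comm]
  rw [cgfT, hlap, Real.log_mul (Real.exp_pos _).ne' (hL.lapT_pos u).ne', Real.log_exp, cgfT,
    add_comm]

theorem inner_eq_of_mem_convexHull {q w : E2} (hq : q ∈ degenerateSubspace P X1)
    (hw : w ∈ convexHull ℝ (msupp (P.map X1))) : ⟪q, w⟫ = ⟪q, meanv P X1⟫ :=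
  convexHull_min (hL.msupp_subset (isClosed_eq (by fun_prop) continuous_const)
    (mem_degenerateSubspace.1 hq))
    (convex_hyperplane (innerₛₗ ℝ q).isLinear _) hw

theorem mem_degenerateSubspace_of_ae_inner_le [IsProbabilityMeasure P] {θ : E2}
    (h : ∀ᵐ ω ∂P, ⟪θ, X1 ω⟫ ≤ ⟪θ, meanv P X1⟫) : θ ∈ degenerateSubspace P X1 := by
  have hint : Integrable (fun ω => ⟪θ, meanv P X1⟫ - ⟪θ, X1 ω⟫) P :=
    (integrable_const _).sub (hL.integrable_inner θ)
  have hzero : ∫ ω, (⟪θ, meanv P X1⟫ - ⟪θ, X1 ω⟫) ∂P = 0 := by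
    rw [integral_sub (integrable_const _) (hL.integrable_inner θ), integral_const, probReal_univ,
      one_smul, integral_inner hL.integrable, meanv, sub_self]
  refine mem_degenerateSubspace.2 ?_
  filter_upwards [(integral_eq_zero_iff_of_nonneg_ae (h.mono fun _ => sub_nonneg.2) hint).1 hzero]
    with ω hω
  exact (sub_eq_zero.1 hω).symm

theorem exists_mem_msupp_inner_gt [IsProbabilityMeasure P] {w θ : E2}
    (hw : w ∈ convexHull ℝ (msupp (P.map X1))) {a b : ℝ} (ha : 0 ≤ a) (hb : 0 < b)
    (hab : a + b = 1) (hθ : θ ∉ degenerateSubspace P X1) :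
    ∃ x ∈ msupp (P.map X1), ⟪θ, a • w + b • meanv P X1⟫ < ⟪θ, x⟫ := by
  by_contra! hle
  set c := ⟪θ, a • w + b • meanv P X1⟫ with hc
  have hwc : ⟪θ, w⟫ ≤ c := convexHull_min hle (convex_halfSpace_le (innerₛₗ ℝ θ).isLinear c) hw
  have hcμ : c ≤ ⟪θ, meanv P X1⟫ := by
    obtain rfl : a = 1 - b := by linarith
    rw [hc, inner_add_right, real_inner_smul_right, real_inner_smul_right] at hwc ⊢
    have hwμ : ⟪θ, w⟫ ≤ ⟪θ, meanv P X1⟫ := le_of_mul_le_mul_left (by linarith) hb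
    linarith [mul_le_mul_of_nonneg_left hwμ ha]
  exact hθ (hL.mem_degenerateSubspace_of_ae_inner_le
    (hL.ae_mem_msupp.mono fun ω hω => (hle _ hω).trans hcμ))

theorem log_measureReal_ball_add_le_cgfT [IsProbabilityMeasure P] {x : E2}
    (hx : x ∈ msupp (P.map X1)) {δ : ℝ} (hδ : 0 < δ) (u : E2) :
    Real.log ((P.map X1).real (Metric.ball x δ)) + (⟪u, x⟫ - ‖u‖ * δ) ≤ cgfT P X1 u := by
  have hX := hL.integrable.aemeasurable
  have : IsProbabilityMeasure (P.map X1) := Measure.isProbabilityMeasure_map hX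
  have hp : 0 < (P.map X1).real (Metric.ball x δ) :=
    ENNReal.toReal_pos (hx _ Metric.isOpen_ball (Metric.mem_ball_self hδ)).ne' (measure_ne_top _ _)
  have hexp : Continuous fun y : E2 => Real.exp ⟪u, y⟫ := by fun_prop
  have hint : Integrable (fun y => Real.exp ⟪u, y⟫) (P.map X1) :=
    (integrable_map_measure hexp.aestronglyMeasurable hX).2 (hL u)
  have hball : ∀ y ∈ Metric.ball x δ, Real.exp (⟪u, x⟫ - ‖u‖ * δ) ≤ Real.exp ⟪u, y⟫ := by
    intro y hy
    have hxy : ⟪u, x - y⟫ ≤ ‖u‖ * δ := (real_inner_le_norm _ _).trans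
      (mul_le_mul_of_nonneg_left (by rw [← dist_eq_norm']; exact (Metric.mem_ball.1 hy).le)
        (norm_nonneg _))
    rw [inner_sub_right] at hxy
    exact Real.exp_le_exp.2 (by linarith)
  have hbound : (P.map X1).real (Metric.ball x δ) * Real.exp (⟪u, x⟫ - ‖u‖ * δ) ≤ lapT P X1 u := by
    rw [lapT, ← integral_map hX hexp.aestronglyMeasurable, ← smul_eq_mul, ← setIntegral_const]
    exact (setIntegral_mono_on (integrableOn_const (measure_ne_top _ _)) hint.integrableOn
      Metric.isOpen_ball.measurableSet hball).trans
      (setIntegral_le_integral hint (ae_of_all _ fun _ => (Real.exp_pos _).le))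
  have h := Real.log_le_log (by positivity) hbound
  rwa [Real.log_mul hp.ne' (Real.exp_pos _).ne', Real.log_exp] at h

theorem exists_mem_nhds_inner_sub_cgfT_le [IsProbabilityMeasure P] {v x θ : E2}
    (hx : x ∈ msupp (P.map X1)) (hlt : ⟪θ, v⟫ < ⟪θ, x⟫) :
    ∃ t ∈ 𝓝 θ, ∃ C, ∀ θ' ∈ t, ‖θ'‖ = 1 → ∀ s : ℝ≥0,
      ⟪(s : ℝ) • θ', v⟫ - cgfT P X1 ((s : ℝ) • θ') ≤ C := by
  set γ := (⟪θ, x⟫ - ⟪θ, v⟫) / 2 with hγ_def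
  have hγ : 0 < γ := by linarith
  have hopen : IsOpen {θ' : E2 | ⟪θ', v⟫ + γ < ⟪θ', x⟫} := isOpen_lt (by fun_prop) (by fun_prop)
  refine ⟨_, hopen.mem_nhds (show ⟪θ, v⟫ + γ < ⟪θ, x⟫ by linarith),
    -Real.log ((P.map X1).real (Metric.ball x γ)), fun θ' hθ'γ hθ' s => ?_⟩
  have hball := hL.log_measureReal_ball_add_le_cgfT hx hγ ((s : ℝ) • θ')
  have hcone := mul_le_mul_of_nonneg_left (le_of_lt hθ'γ) s.coe_nonneg
  rw [norm_smul, NNReal.norm_eq, hθ', mul_one, real_inner_smul_left] at hball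
  rw [real_inner_smul_left]
  nlinarith

theorem exists_mem_convexHull_norm_lt [IsProbabilityMeasure P] {r : ℝ} (hr : rmin P X1 < r) :
    ∃ w ∈ convexHull ℝ (msupp (P.map X1)), ‖w‖ < r := by
  have : IsProbabilityMeasure (P.map X1) :=
    Measure.isProbabilityMeasure_map hL.integrable.aemeasurable
  have hne : (msupp (P.map X1)).Nonempty :=
    msupp_eq_support _ ▸ Measure.nonempty_support (IsProbabilityMeasure.ne_zero _)
  obtain ⟨_, ⟨w, hw, rfl⟩, hwr⟩ :=
    exists_lt_of_csInf_lt ((hne.mono (subset_convexHull ℝ _)).image _) hr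
  exact ⟨w, hw, hwr⟩

end HasFiniteLaplace

theorem ofReal_le_rateI (u v : E2) : ENNReal.ofReal (⟪u, v⟫ - cgfT P X1 u) ≤ rateI P X1 v :=
  le_iSup (fun u => ENNReal.ofReal (⟪u, v⟫ - cgfT P X1 u)) u

theorem lowerSemicontinuous_rateI : LowerSemicontinuous (rateI P X1) :=
  lowerSemicontinuous_iSup fun _ =>
    (ENNReal.continuous_ofReal.comp (by fun_prop)).lowerSemicontinuous

theorem rateI_smul_add_le {a b : ℝ} (ha : 0 ≤ a) (hb : 0 ≤ b) (hab : a + b = 1) (x y : E2) :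
    rateI P X1 (a • x + b • y) ≤
      ENNReal.ofReal a * rateI P X1 x + ENNReal.ofReal b * rateI P X1 y := by
  refine iSup_le fun u => ?_
  have hsplit : ⟪u, a • x + b • y⟫ - cgfT P X1 u
      = a * (⟪u, x⟫ - cgfT P X1 u) + b * (⟪u, y⟫ - cgfT P X1 u) := by
    simp only [inner_add_right, real_inner_smul_right]
    linear_combination cgfT P X1 u * hab
  calc ENNReal.ofReal (⟪u, a • x + b • y⟫ - cgfT P X1 u)
      ≤ ENNReal.ofReal (a * (⟪u, x⟫ - cgfT P X1 u)) +
          ENNReal.ofReal (b * (⟪u, y⟫ - cgfT P X1 u)) := hsplit ▸ ENNReal.ofReal_add_le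
    _ ≤ ENNReal.ofReal a * rateI P X1 x + ENNReal.ofReal b * rateI P X1 y := by
      rw [ENNReal.ofReal_mul ha, ENNReal.ofReal_mul hb]
      gcongr <;> exact ofReal_le_rateI u _

theorem rateI_meanv [IsProbabilityMeasure P] (hL : HasFiniteLaplace P X1) :
    rateI P X1 (meanv P X1) = 0 :=
  nonpos_iff_eq_zero.1 <| iSup_le fun u => by
    simpa using hL.inner_meanv_le_cgfT u

theorem rateI_pos [IsProbabilityMeasure P] (hL : HasFiniteLaplace P X1) {v : E2}
    (hv : v ≠ meanv P X1) : 0 < rateI P X1 v := by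
  set w := v - meanv P X1
  have hderiv : HasDerivAt (fun t : ℝ => t * ⟪w, v⟫ - cgfT P X1 (t • w)) (‖w‖ ^ 2) 0 := by
    refine (((hasDerivAt_id 0).mul_const ⟪w, v⟫).sub (hL.hasDerivAt_cgfT_smul w)).congr_deriv ?_
    rw [one_mul, ← inner_sub_right, real_inner_self_eq_norm_sq]
  have hslope := (hasDerivAt_iff_tendsto_slope_left_right.1 hderiv).2.eventually
    (lt_mem_nhds (pow_pos (norm_pos_iff.2 (sub_ne_zero.2 hv)) 2))
  obtain ⟨t, hslope, ht⟩ := (hslope.and self_mem_nhdsWithin).exists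
  have hval : 0 < t * ⟪w, v⟫ - cgfT P X1 (t • w) := by
    simpa [slope_def_field, cgfT, lapT, div_pos_iff_of_pos_right ht] using hslope
  exact (ENNReal.ofReal_pos.2 (real_inner_smul_left w v t ▸ hval)).trans_le (ofReal_le_rateI _ v)

theorem rateI_lt_top_of_forall_exists_inner_lt [IsProbabilityMeasure P]
    (hL : HasFiniteLaplace P X1) {v : E2}
    (hM : ∀ q ∈ degenerateSubspace P X1, ⟪q, v⟫ = ⟪q, meanv P X1⟫)
    (hdir : ∀ θ ∈ (degenerateSubspace P X1)ᗮ, θ ≠ 0 →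
      ∃ x ∈ msupp (P.map X1), ⟪θ, v⟫ < ⟪θ, x⟫) :
    rateI P X1 v < ⊤ := by
  set M := degenerateSubspace P X1
  set G : E2 → ℝ := fun u => ⟪u, v⟫ - cgfT P X1 u
  -- `K` is affine along `M` and `v - μ ⊥ M`, so `G` only sees the component of `u` in `Mᗮ`.
  have hproj : ∀ u, G u = G (u - M.starProjection u) := by
    intro u
    have hq := M.starProjection_apply_mem u
    conv_lhs => rw [← sub_add_cancel u (M.starProjection u)]
    simp only [G, inner_add_left, hL.cgfT_add_of_mem_degenerateSubspace hq, hM _ hq]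
    ring
  have hS : IsCompact ((Mᗮ : Set E2) ∩ Metric.sphere 0 1) :=
    (isCompact_sphere 0 1).inter_left (Submodule.closed_of_finiteDimensional _)
  obtain ⟨C, hC⟩ := hS.exists_forall_le_of_forall_nhdsWithin
      (g := fun θ (s : ℝ≥0) => G ((s : ℝ) • θ)) fun θ ⟨hθM, hθ⟩ => by
    rw [mem_sphere_zero_iff_norm] at hθ
    obtain ⟨x, hx, hlt⟩ := hdir θ hθM (norm_ne_zero_iff.1 (hθ ▸ one_ne_zero))
    obtain ⟨t, ht, C, hC⟩ := hL.exists_mem_nhds_inner_sub_cgfT_le hx hlt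
    exact ⟨t ∩ ((Mᗮ : Set E2) ∩ Metric.sphere 0 1),
      inter_mem (mem_nhdsWithin_of_mem_nhds ht) self_mem_nhdsWithin, C,
      fun θ' hθ' => hC θ' hθ'.1 (mem_sphere_zero_iff_norm.1 hθ'.2.2)⟩
  refine (iSup_le fun u => ENNReal.ofReal_le_ofReal (?_ : G u ≤ max C 0)).trans_lt
    ENNReal.ofReal_lt_top
  rw [hproj u]
  set u' := u - M.starProjection u
  rcases eq_or_ne u' 0 with h0 | h0
  · simp [G, h0, cgfT, lapT]
  · have h := hC (‖u'‖⁻¹ • u') ⟨Mᗮ.smul_mem _ (M.sub_starProjection_mem_orthogonal u),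
      mem_sphere_zero_iff_norm.2 (norm_smul_inv_norm h0)⟩ ‖u'‖₊
    rw [coe_nnnorm, smul_inv_smul₀ (norm_ne_zero_iff.2 h0)] at h
    exact h.trans (le_max_left _ _)

theorem rateI_smul_add_meanv_lt_top [IsProbabilityMeasure P] (hL : HasFiniteLaplace P X1)
    {w : E2} (hw : w ∈ convexHull ℝ (msupp (P.map X1))) {a b : ℝ} (ha : 0 ≤ a) (hb : 0 < b)
    (hab : a + b = 1) : rateI P X1 (a • w + b • meanv P X1) < ⊤ := by
  refine rateI_lt_top_of_forall_exists_inner_lt hL (fun q hq => ?_)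
    fun θ hθ hθ0 => hL.exists_mem_msupp_inner_gt hw ha hb hab fun hθM => hθ0 ?_
  · rw [inner_add_right, real_inner_smul_right, real_inner_smul_right,
      hL.inner_eq_of_mem_convexHull hq hw]
    linear_combination ⟪q, meanv P X1⟫ * hab
  · exact (Submodule.mem_bot ℝ).1 ((Submodule.orthogonal_disjoint _).le_bot ⟨hθM, hθ⟩)

theorem radMin_of_nonneg {r : ℝ} (hr : 0 ≤ r) :
    radMin P X1 r = ⨅ ℓ ∈ {ℓ : E2 | ‖ℓ‖ = 1}, rateI P X1 (r • ℓ) :=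
  if_neg hr.not_gt

theorem radMin_norm_le (v : E2) : radMin P X1 ‖v‖ ≤ rateI P X1 v := by
  rw [radMin_of_nonneg (norm_nonneg v)]
  rcases eq_or_ne v 0 with rfl | hv
  · exact iInf₂_le (EuclideanSpace.single 0 1) (by simp) |>.trans_eq (by simp)
  · refine iInf₂_le (‖v‖⁻¹ • v) (norm_smul_inv_norm hv) |>.trans_eq ?_
    rw [smul_inv_smul₀ (norm_ne_zero_iff.2 hv)]

theorem exists_norm_eq_rateI_eq_radMin {r : ℝ} (hr : 0 ≤ r) :
    ∃ v : E2, ‖v‖ = r ∧ rateI P X1 v = radMin P X1 r := by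
  have hlsc : LowerSemicontinuous fun ℓ : E2 => rateI P X1 (r • ℓ) :=
    lowerSemicontinuous_rateI.comp (continuous_const_smul r)
  obtain ⟨ℓ, hℓ, hmin⟩ := LowerSemicontinuousOn.exists_isMinOn
    (NormedSpace.sphere_nonempty.2 zero_le_one) (isCompact_sphere (0 : E2) 1)
    (hlsc.lowerSemicontinuousOn _)
  rw [mem_sphere_zero_iff_norm] at hℓ
  refine ⟨r • ℓ, by rw [norm_smul, hℓ, Real.norm_of_nonneg hr, mul_one], le_antisymm ?_ ?_⟩
  · rw [radMin_of_nonneg hr]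
    exact le_iInf₂ fun ℓ' hℓ' => hmin (mem_sphere_zero_iff_norm.2 hℓ')
  · rw [radMin_of_nonneg hr]
    exact iInf₂_le ℓ hℓ

theorem lowerSemicontinuous_radMin : LowerSemicontinuous (radMin P X1) := by
  have : Nonempty (Metric.sphere (0 : E2) 1) :=
    (NormedSpace.sphere_nonempty.2 zero_le_one).to_subtype
  have hsphere : LowerSemicontinuous fun r : ℝ => ⨅ ℓ : Metric.sphere (0 : E2) 1,
      rateI P X1 (r • (ℓ : E2)) :=
    LowerSemicontinuous.iInf_of_compactSpace (lowerSemicontinuous_rateI.comp (by fun_prop))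
  have hneg : LowerSemicontinuous ((Iio (0 : ℝ)).indicator fun _ => (⊤ : ℝ≥0∞)) :=
    isOpen_Iio.lowerSemicontinuous_indicator zero_le
  convert hsphere.sup hneg using 1
  ext r
  rcases lt_or_ge r 0 with hr | hr
  · simp [radMin, hr]
  · have hS : {ℓ : E2 | ‖ℓ‖ = 1} = Metric.sphere 0 1 := by ext; simp
    rw [radMin_of_nonneg hr, hS, iInf_subtype',
      indicator_of_notMem (s := Iio 0) hr.not_gt, max_eq_left zero_le]

theorem radMin_meanv [IsProbabilityMeasure P] (hL : HasFiniteLaplace P X1) :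
    radMin P X1 ‖meanv P X1‖ = 0 :=
  nonpos_iff_eq_zero.1 <| (radMin_norm_le _).trans_eq (rateI_meanv hL)

theorem radMin_norm_smul_add_le [IsProbabilityMeasure P] (hL : HasFiniteLaplace P X1) {a b : ℝ}
    (ha : 0 ≤ a) (hb : 0 ≤ b) (hab : a + b = 1) (v : E2) :
    radMin P X1 ‖a • v + b • meanv P X1‖ ≤ ENNReal.ofReal a * rateI P X1 v := by
  refine (radMin_norm_le _).trans ((rateI_smul_add_le ha hb hab _ _).trans_eq ?_)
  rw [rateI_meanv hL, mul_zero, add_zero]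

theorem radMin_lt_of_mem_uIcc [IsProbabilityMeasure P] (hL : HasFiniteLaplace P X1) {r ρ : ℝ}
    (hρ : 0 ≤ ρ) (hr : r ∈ uIcc ρ ‖meanv P X1‖) (hne : r ≠ ρ) (hfin : radMin P X1 ρ ≠ ⊤) :
    radMin P X1 r < radMin P X1 ρ := by
  obtain ⟨v, rfl, hv⟩ := exists_norm_eq_rateI_eq_radMin (P := P) (X1 := X1) hρ
  obtain ⟨z, ⟨a, b, ha, hb, hab, rfl⟩, rfl⟩ := exists_mem_segment_norm_eq hr
  have hvμ : v ≠ meanv P X1 := by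
    rintro rfl
    exact hne (by simpa using hr)
  have ha1 : ENNReal.ofReal a < 1 := by
    refine ENNReal.ofReal_lt_one.2 (lt_of_le_of_ne (by linarith) fun ha1 => hne ?_)
    obtain rfl : b = 0 := by linarith
    simp [ha1]
  rw [← hv] at hfin ⊢
  calc radMin P X1 ‖a • v + b • meanv P X1‖ ≤ ENNReal.ofReal a * rateI P X1 v :=
        radMin_norm_smul_add_le hL ha hb hab v
    _ < 1 * rateI P X1 v := ENNReal.mul_lt_mul_left (rateI_pos hL hvμ).ne' hfin ha1
    _ = rateI P X1 v := one_mul _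

theorem radMin_lt_top [IsProbabilityMeasure P] (hL : HasFiniteLaplace P X1) {w : E2}
    (hw : w ∈ convexHull ℝ (msupp (P.map X1))) {r : ℝ} (hr : r ∈ uIcc ‖w‖ ‖meanv P X1‖)
    (hne : r ≠ ‖w‖) : radMin P X1 r < ⊤ := by
  obtain ⟨z, ⟨a, b, ha, hb, hab, rfl⟩, rfl⟩ := exists_mem_segment_norm_eq hr
  refine (radMin_norm_le _).trans_lt (rateI_smul_add_meanv_lt_top hL hw ha ?_ hab)
  refine hb.lt_of_ne fun hb0 => hne ?_
  obtain rfl : a = 1 := by linarith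
  simp [← hb0]

theorem ennConvexOn_radMin [IsProbabilityMeasure P] (hL : HasFiniteLaplace P X1) :
    ENNConvexOn (Icc 0 ‖meanv P X1‖) (radMin P X1) := by
  intro x hx y hy a b hab
  have habR : (a : ℝ) + b = 1 := by exact_mod_cast hab
  have hz := convex_Icc (0 : ℝ) ‖meanv P X1‖ hx hy a.coe_nonneg b.coe_nonneg habR
  simp only [smul_eq_mul] at hz
  obtain ⟨vx, rfl, hvx⟩ := exists_norm_eq_rateI_eq_radMin (P := P) (X1 := X1) hx.1
  obtain ⟨vy, rfl, hvy⟩ := exists_norm_eq_rateI_eq_radMin (P := P) (X1 := X1) hy.1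
  set v := (a : ℝ) • vx + (b : ℝ) • vy
  have hv : ‖v‖ ≤ a * ‖vx‖ + b * ‖vy‖ :=
    (norm_add_le _ _).trans_eq (by simp [norm_smul])
  obtain ⟨z, ⟨c, d, hc, hd, hcd, rfl⟩, hzn⟩ :=
    exists_mem_segment_norm_eq (mem_uIcc_of_le hv hz.2)
  rw [← hzn]
  calc radMin P X1 ‖c • v + d • meanv P X1‖ ≤ ENNReal.ofReal c * rateI P X1 v :=
        radMin_norm_smul_add_le hL hc hd hcd v
    _ ≤ rateI P X1 v := mul_le_of_le_one_left' (ENNReal.ofReal_le_one.2 (by linarith))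
    _ ≤ ENNReal.ofReal a * rateI P X1 vx + ENNReal.ofReal b * rateI P X1 vy :=
        rateI_smul_add_le a.coe_nonneg b.coe_nonneg habR vx vy
    _ = a * radMin P X1 ‖vx‖ + b * radMin P X1 ‖vy‖ := by
        rw [hvx, hvy, ENNReal.ofReal_coe_nnreal, ENNReal.ofReal_coe_nnreal]

theorem exists_mem_msupp_norm_gt {r : ℝ} (hr : ENNReal.ofReal r < rmaxE P X1) :
    ∃ y ∈ msupp (P.map X1), r < ‖y‖ := by
  obtain ⟨y, hy⟩ := lt_iSup_iff.1 hr
  obtain ⟨hy, hry⟩ := lt_iSup_iff.1 hy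
  rw [← enorm_eq_nnnorm, ← ofReal_norm] at hry
  exact ⟨y, hy, (ENNReal.ofReal_lt_ofReal_iff'.1 hry).1⟩

theorem strictAntiOn_radMin [IsProbabilityMeasure P] (hL : HasFiniteLaplace P X1) :
    StrictAntiOn (radMin P X1) (Icc (rmin P X1) ‖meanv P X1‖) := by
  intro r₁ h₁ r₂ h₂ h12
  by_cases hfin : radMin P X1 r₁ = ⊤
  · obtain ⟨w, hw, hwr⟩ := hL.exists_mem_convexHull_norm_lt (h₁.1.trans_lt h12)
    rw [hfin]
    exact radMin_lt_top hL hw (mem_uIcc_of_le hwr.le h₂.2) hwr.ne'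
  · exact radMin_lt_of_mem_uIcc hL ((rmin_nonneg P X1).trans h₁.1) (mem_uIcc_of_le h12.le h₂.2)
      h12.ne' hfin

theorem strictMonoOn_radMin [IsProbabilityMeasure P] (hL : HasFiniteLaplace P X1) :
    StrictMonoOn (radMin P X1) {r : ℝ | ‖meanv P X1‖ ≤ r ∧ ENNReal.ofReal r ≤ rmaxE P X1} := by
  intro r₁ h₁ r₂ h₂ h12
  by_cases hfin : radMin P X1 r₂ = ⊤
  · obtain ⟨y, hy, hyr⟩ := exists_mem_msupp_norm_gt
      ((ENNReal.ofReal_lt_ofReal_iff ((norm_nonneg _).trans_lt (h₁.1.trans_lt h12))).2 h12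
        |>.trans_le h₂.2)
    rw [hfin]
    exact radMin_lt_top hL (subset_convexHull ℝ _ hy) (mem_uIcc_of_ge h₁.1 hyr.le) hyr.ne
  · exact radMin_lt_of_mem_uIcc hL ((norm_nonneg _).trans (h₁.1.trans h12.le))
      (mem_uIcc_of_ge h₁.1 h12.le) h12.ne hfin

end

theorem radMin_basic_properties_general
    {Ω : Type*} [MeasurableSpace Ω] (P : Measure Ω) [IsProbabilityMeasure P]
    (X1 : Ω → E2)
    (hLap : ∀ u : E2, Integrable (fun ω => Real.exp ⟪u, X1 ω⟫) P) :
    LowerSemicontinuous (radMin P X1) ∧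
      radMin P X1 ‖meanv P X1‖ = 0 ∧
      StrictAntiOn (radMin P X1) (Set.Icc (rmin P X1) ‖meanv P X1‖) ∧
      ENNConvexOn (Set.Icc (rmin P X1) ‖meanv P X1‖) (radMin P X1) ∧
      StrictMonoOn (radMin P X1)
        {r : ℝ | ‖meanv P X1‖ ≤ r ∧ ENNReal.ofReal r ≤ rmaxE P X1} :=
  ⟨lowerSemicontinuous_radMin, radMin_meanv hLap, strictAntiOn_radMin hLap,
    (ennConvexOn_radMin hLap).subset (Icc_subset_Icc_left (rmin_nonneg P X1)),
    strictMonoOn_radMin hLap⟩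

/-- The radial minimum function `ubar I` is lower semi-continuous on `ℝ`,
satisfies `ubar I(|μ|) = 0`, is strictly decreasing and convex on `[r_min, |μ|]`, and is
strictly increasing on `[|μ|, r_max]` (meaning `[|μ|, ∞)` if `r_max = ∞`; the condition
`r ≤ r_max` is expressed as `ENNReal.ofReal r ≤ rmaxE`). -/
theorem radMin_basic_properties
    {Ω : Type*} [MeasurableSpace Ω] (P : Measure Ω) [IsProbabilityMeasure P]
    (X1 : Ω → E2) (hX : Measurable X1)
    (hLap : ∀ u : E2, Integrable (fun ω => Real.exp ⟪u, X1 ω⟫) P) :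
    LowerSemicontinuous (radMin P X1) ∧
      radMin P X1 ‖meanv P X1‖ = 0 ∧
      StrictAntiOn (radMin P X1) (Set.Icc (rmin P X1) ‖meanv P X1‖) ∧
      ENNConvexOn (Set.Icc (rmin P X1) ‖meanv P X1‖) (radMin P X1) ∧
      StrictMonoOn (radMin P X1)
        {r : ℝ | ‖meanv P X1‖ ≤ r ∧ ENNReal.ofReal r ≤ rmaxE P X1} :=
  radMin_basic_properties_general P X1 hLap

end
end

section
/- If r ≥ |μ|, p > 0, bar K is differentiable at p, and bar K'(p) = r, then ubar Λ_r = bar Λ_p, i.e. the set of directions minimizing I on the circle of radius r coincides with the set of directions maximizing K on the circle of radius p. -/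
/-! For a maximising direction `ℓ`, the line `t ↦ K (p • ℓ + t • (u - p • ℓ))` is convex and lies
below `t ↦ bar K ‖p • ℓ + t • (u - p • ℓ)‖`, with equality at `t = 0`. Comparing left slopes at `0`,
differentiability of `bar K` at `p` makes `r • ℓ` a subgradient of `K` at `p • ℓ`, so
`I (r • ℓ) = p * r - K (p • ℓ)`. For every unit `ℓ'` one has `I (r • ℓ') ≥ p * r - K (p • ℓ')`
(take `u = p • ℓ'` in the supremum), hence `I (r • ·)` is smallest exactly where `K (p • ·)` is
largest. -/

open MeasureTheory Set Filter
open scoped ENNReal NNReal RealInnerProductSpace Topology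

noncomputable section

/-- The radial maximum `bar K(p) = max_{|ℓ|=1} K(pℓ)` of the cumulant generating function. -/
def barK {Ω : Type*} [MeasurableSpace Ω] (P : Measure Ω) (X1 : Ω → E2) (p : ℝ) : ℝ :=
  sSup ((fun ℓ : E2 => cgfT P X1 (p • ℓ)) '' {ℓ : E2 | ‖ℓ‖ = 1})

/-- The radial maximum `bar 𝓛(p) = max_{|ℓ|=1} 𝓛(pℓ)` of the Laplace transform. -/
def barL {Ω : Type*} [MeasurableSpace Ω] (P : Measure Ω) (X1 : Ω → E2) (p : ℝ) : ℝ :=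
  sSup ((fun ℓ : E2 => lapT P X1 (p • ℓ)) '' {ℓ : E2 | ‖ℓ‖ = 1})

/-- The set of maximal directions `bar Λ_p = argmax_{|ℓ|=1} K(pℓ)`. -/
def maxDirs {Ω : Type*} [MeasurableSpace Ω] (P : Measure Ω) (X1 : Ω → E2) (p : ℝ) :
    Set E2 :=
  {ℓ : E2 | ‖ℓ‖ = 1 ∧ ∀ ℓ' : E2, ‖ℓ'‖ = 1 → cgfT P X1 (p • ℓ') ≤ cgfT P X1 (p • ℓ)}

lemma setOf_norm_eq_one_eq_sphere {E : Type*} [SeminormedAddCommGroup E] :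
    {ℓ : E | ‖ℓ‖ = 1} = Metric.sphere 0 1 := by
  ext ℓ; simp

section RadialMax

variable {E : Type*} [NormedAddCommGroup E] [InnerProductSpace ℝ E] {f : E → ℝ} {p r : ℝ}
  {ℓ : E}

-- `barK P X1` and `rateI P X1` are `radialMax (cgfT P X1)` and `fenchelConjENN (cgfT P X1)`.
def radialMax (f : E → ℝ) (p : ℝ) : ℝ :=
  sSup ((fun ℓ : E => f (p • ℓ)) '' {ℓ : E | ‖ℓ‖ = 1})

def fenchelConjENN (f : E → ℝ) (v : E) : ℝ≥0∞ :=
  ⨆ u : E, ENNReal.ofReal (⟪u, v⟫ - f u)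

lemma radialMax_eq_of_isMax (hℓ : ‖ℓ‖ = 1)
    (hmax : ∀ ℓ' : E, ‖ℓ'‖ = 1 → f (p • ℓ') ≤ f (p • ℓ)) :
    radialMax f p = f (p • ℓ) :=
  IsGreatest.csSup_eq ⟨mem_image_of_mem _ hℓ, by rintro _ ⟨ℓ', hℓ', rfl⟩; exact hmax ℓ' hℓ'⟩

lemma hasDerivAt_norm_add_smul {x : E} (hx : x ≠ 0) (w : E) :
    HasDerivAt (fun t : ℝ => ‖x + t • w‖) (⟪x, w⟫ / ‖x‖) 0 := by
  have hline : HasDerivAt (fun t : ℝ => x + t • w) w 0 := by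
    simpa using ((hasDerivAt_id (0 : ℝ)).smul_const w).const_add x
  have hsq := hline.norm_sq
  simp only [zero_smul, add_zero] at hsq
  have hsqrt := hsq.sqrt (by simpa using hx)
  simp only [Real.sqrt_sq (norm_nonneg _), zero_smul, add_zero] at hsqrt
  convert hsqrt using 1
  field_simp

lemma ofReal_sub_le_fenchelConjENN_smul (hℓ : ‖ℓ‖ = 1) :
    ENNReal.ofReal (p * r - f (p • ℓ)) ≤ fenchelConjENN f (r • ℓ) := by
  have hinner : ⟪p • ℓ, r • ℓ⟫ = p * r := by
    rw [real_inner_smul_left, real_inner_smul_right, real_inner_self_eq_norm_sq, hℓ]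
    ring
  exact hinner ▸ le_iSup (fun u => ENNReal.ofReal (⟪u, r • ℓ⟫ - f u)) (p • ℓ)

variable [FiniteDimensional ℝ E]

lemma bddAbove_image_unit_sphere (hf : ConvexOn ℝ univ f) (p : ℝ) :
    BddAbove ((fun ℓ : E => f (p • ℓ)) '' {ℓ : E | ‖ℓ‖ = 1}) := by
  have hcont : Continuous f := continuousOn_univ.1 (hf.continuousOn isOpen_univ)
  rw [setOf_norm_eq_one_eq_sphere]
  exact ((isCompact_sphere 0 1).image (hcont.comp (continuous_const_smul p))).bddAbove

variable [Nontrivial E]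

lemma exists_isMax_unit_sphere (hf : ConvexOn ℝ univ f) (p : ℝ) :
    ∃ ℓ : E, ‖ℓ‖ = 1 ∧ ∀ ℓ' : E, ‖ℓ'‖ = 1 → f (p • ℓ') ≤ f (p • ℓ) := by
  have hcont : Continuous f := continuousOn_univ.1 (hf.continuousOn isOpen_univ)
  obtain ⟨ℓ, hℓ, hmax⟩ := (isCompact_sphere (0 : E) 1).exists_isMaxOn
    (NormedSpace.sphere_nonempty.2 zero_le_one) (hcont.comp (continuous_const_smul p)).continuousOn
  exact ⟨ℓ, mem_sphere_zero_iff_norm.1 hℓ, fun ℓ' hℓ' => hmax (mem_sphere_zero_iff_norm.2 hℓ')⟩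

lemma apply_le_radialMax_norm (hf : ConvexOn ℝ univ f) (v : E) : f v ≤ radialMax f ‖v‖ := by
  obtain ⟨ℓ, hℓ, hv⟩ : ∃ ℓ : E, ‖ℓ‖ = 1 ∧ ‖v‖ • ℓ = v := by
    rcases eq_or_ne v 0 with rfl | hv
    · obtain ⟨ℓ, hℓ⟩ := (NormedSpace.sphere_nonempty (x := (0 : E))).2 zero_le_one
      exact ⟨ℓ, mem_sphere_zero_iff_norm.1 hℓ, by simp⟩
    · exact ⟨‖v‖⁻¹ • v, norm_smul_inv_norm hv, by
        rw [smul_smul, mul_inv_cancel₀ (norm_ne_zero_iff.2 hv), one_smul]⟩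
  conv_lhs => rw [← hv]
  exact le_csSup (bddAbove_image_unit_sphere hf _) (mem_image_of_mem _ hℓ)

lemma le_apply_of_hasDerivAt_radialMax (hf : ConvexOn ℝ univ f) (hp : 0 < p) (hℓ : ‖ℓ‖ = 1)
    (hmax : ∀ ℓ' : E, ‖ℓ'‖ = 1 → f (p • ℓ') ≤ f (p • ℓ))
    (hderiv : HasDerivAt (radialMax f) r p) (u : E) :
    f (p • ℓ) + r * (⟪u, ℓ⟫ - p) ≤ f u := by
  set x := p • ℓ with hxdef
  set w := u - x
  have hx : ‖x‖ = p := by rw [norm_smul, hℓ, Real.norm_of_nonneg hp.le, mul_one]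
  have hx0 : x ≠ 0 := norm_ne_zero_iff.1 (hx ▸ hp.ne')
  set g : ℝ → ℝ := fun t => f (x + t • w)
  set h : ℝ → ℝ := fun t => radialMax f ‖x + t • w‖
  have hg : ConvexOn ℝ univ g := by
    have := hf.comp_affineMap (AffineMap.lineMap x u)
    rw [preimage_univ] at this
    exact this.congr fun t _ => by simp [g, w, AffineMap.lineMap_apply_module', add_comm]
  have hgh : ∀ t, g t ≤ h t := fun t => apply_le_radialMax_norm hf _
  have hgh0 : g 0 = h 0 := by
    simp only [g, h, zero_smul, add_zero, hx]
    exact (radialMax_eq_of_isMax hℓ hmax).symm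
  have hh : HasDerivAt h (r * (⟪u, ℓ⟫ - p)) 0 := by
    have hd : HasDerivAt (radialMax f) r ‖x + (0 : ℝ) • w‖ := by simpa [hx] using hderiv
    refine (hd.comp 0 (hasDerivAt_norm_add_smul hx0 w)).congr_deriv ?_
    show r * (⟪x, u - x⟫ / ‖x‖) = _
    rw [inner_sub_right, real_inner_self_eq_norm_sq, hx, hxdef, real_inner_smul_left,
      real_inner_comm]
    field_simp
  have hslope : ∀ t < 0, slope h 0 t ≤ g 1 - g 0 := by
    intro t ht
    calc slope h 0 t ≤ slope g 0 t := by
          simp only [slope_def_field, sub_zero]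
          exact div_le_div_of_nonpos_of_le ht.le (by linarith [hgh t])
      _ ≤ slope g 0 1 :=
          hg.slope_mono (mem_univ 0) ⟨mem_univ t, ht.ne⟩ ⟨mem_univ 1, one_ne_zero⟩ (by linarith)
      _ = g 1 - g 0 := by simp [slope_def_field]
  have hlim : Tendsto (slope h 0) (𝓝[<] 0) (𝓝 (r * (⟪u, ℓ⟫ - p))) :=
    (hasDerivAt_iff_tendsto_slope.1 hh).mono_left (nhdsWithin_mono _ fun t ht => ne_of_lt ht)
  have := le_of_tendsto hlim (eventually_nhdsWithin_of_forall hslope)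
  simp only [g, zero_smul, add_zero, one_smul, w, add_sub_cancel] at this
  linarith

lemma fenchelConjENN_smul_eq_of_isMax (hf : ConvexOn ℝ univ f) (hp : 0 < p) (hℓ : ‖ℓ‖ = 1)
    (hmax : ∀ ℓ' : E, ‖ℓ'‖ = 1 → f (p • ℓ') ≤ f (p • ℓ))
    (hderiv : HasDerivAt (radialMax f) r p) :
    fenchelConjENN f (r • ℓ) = ENNReal.ofReal (p * r - f (p • ℓ)) := by
  refine le_antisymm (iSup_le fun u => ENNReal.ofReal_le_ofReal ?_)
    (ofReal_sub_le_fenchelConjENN_smul hℓ)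
  have := le_apply_of_hasDerivAt_radialMax hf hp hℓ hmax hderiv u
  rw [real_inner_smul_right]
  linarith

theorem argmin_fenchelConjENN_eq_argmax_of_hasDerivAt_radialMax (hf : ConvexOn ℝ univ f)
    (hf0 : f 0 ≤ 0) (hp : 0 < p) (hderiv : HasDerivAt (radialMax f) r p) :
    {ℓ : E | ‖ℓ‖ = 1 ∧ ∀ ℓ' : E, ‖ℓ'‖ = 1 →
        fenchelConjENN f (r • ℓ) ≤ fenchelConjENN f (r • ℓ')} =
      {ℓ : E | ‖ℓ‖ = 1 ∧ ∀ ℓ' : E, ‖ℓ'‖ = 1 → f (p • ℓ') ≤ f (p • ℓ)} := by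
  ext ℓ
  constructor
  · rintro ⟨hℓ, hmin⟩
    refine ⟨hℓ, fun ℓ' hℓ' => ?_⟩
    obtain ⟨ℓ₀, hℓ₀, hmax₀⟩ := exists_isMax_unit_sphere hf p
    have hconj₀ := fenchelConjENN_smul_eq_of_isMax hf hp hℓ₀ hmax₀ hderiv
    have hnonneg : 0 ≤ p * r - f (p • ℓ₀) := by
      have := le_apply_of_hasDerivAt_radialMax hf hp hℓ₀ hmax₀ hderiv 0
      rw [inner_zero_left] at this
      linarith
    have hle := (ofReal_sub_le_fenchelConjENN_smul (p := p) hℓ).trans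
      ((hmin ℓ₀ hℓ₀).trans hconj₀.le)
    rw [ENNReal.ofReal_le_ofReal_iff hnonneg] at hle
    linarith [hmax₀ ℓ' hℓ']
  · rintro ⟨hℓ, hmax⟩
    refine ⟨hℓ, fun ℓ' hℓ' => ?_⟩
    calc fenchelConjENN f (r • ℓ) = ENNReal.ofReal (p * r - f (p • ℓ)) :=
          fenchelConjENN_smul_eq_of_isMax hf hp hℓ hmax hderiv
      _ ≤ ENNReal.ofReal (p * r - f (p • ℓ')) :=
          ENNReal.ofReal_le_ofReal (by linarith [hmax ℓ' hℓ'])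
      _ ≤ fenchelConjENN f (r • ℓ') := ofReal_sub_le_fenchelConjENN_smul hℓ'

end RadialMax

section CumulantGeneratingFunction

variable {Ω : Type*} [MeasurableSpace Ω] {P : Measure Ω} {X1 : Ω → E2}

lemma ofReal_lapT (hLap : ∀ u : E2, Integrable (fun ω => Real.exp ⟪u, X1 ω⟫) P) (u : E2) :
    ENNReal.ofReal (lapT P X1 u) = ∫⁻ ω, ENNReal.ofReal (Real.exp ⟪u, X1 ω⟫) ∂P :=
  ofReal_integral_eq_lintegral_ofReal (hLap u) (.of_forall fun _ => (Real.exp_pos _).le)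

lemma lapT_nonneg (u : E2) : 0 ≤ lapT P X1 u :=
  integral_nonneg fun _ => (Real.exp_pos _).le

lemma lapT_pos [NeZero P] (hLap : ∀ u : E2, Integrable (fun ω => Real.exp ⟪u, X1 ω⟫) P)
    (u : E2) : 0 < lapT P X1 u := by
  rw [lapT, integral_pos_iff_support_of_nonneg (fun _ => (Real.exp_pos _).le) (hLap u)]
  simp [Function.support, (Real.exp_pos _).ne', NeZero.ne P]

lemma lapT_smul_add_le (hLap : ∀ u : E2, Integrable (fun ω => Real.exp ⟪u, X1 ω⟫) P)
    {a b : ℝ} (ha : 0 ≤ a) (hb : 0 ≤ b) (hab : a + b = 1) (u v : E2) :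
    lapT P X1 (a • u + b • v) ≤ lapT P X1 u ^ a * lapT P X1 v ^ b := by
  have hexp : ∀ x : E2, ENNReal.ofReal (Real.exp ⟪a • u + b • v, x⟫) =
      ENNReal.ofReal (Real.exp ⟪u, x⟫) ^ a * ENNReal.ofReal (Real.exp ⟪v, x⟫) ^ b := by
    intro x
    rw [ENNReal.ofReal_rpow_of_nonneg (Real.exp_pos _).le ha,
      ENNReal.ofReal_rpow_of_nonneg (Real.exp_pos _).le hb, ← ENNReal.ofReal_mul (by positivity),
      ← Real.exp_mul, ← Real.exp_mul, ← Real.exp_add, inner_add_left, real_inner_smul_left,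
      real_inner_smul_left, mul_comm a, mul_comm b]
  have hmeas : ∀ u : E2, AEMeasurable (fun ω => ENNReal.ofReal (Real.exp ⟪u, X1 ω⟫)) P :=
    fun u => (hLap u).aemeasurable.ennreal_ofReal
  have hH : ENNReal.ofReal (lapT P X1 (a • u + b • v)) ≤
      ENNReal.ofReal (lapT P X1 u) ^ a * ENNReal.ofReal (lapT P X1 v) ^ b := by
    simp only [ofReal_lapT hLap, hexp]
    -- Hölder's inequality with exponents `1 / a` and `1 / b`
    exact ENNReal.lintegral_mul_norm_pow_le (hmeas u) (hmeas v) ha hb hab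
  have hu := Real.rpow_nonneg (lapT_nonneg (P := P) (X1 := X1) u) a
  have hv := Real.rpow_nonneg (lapT_nonneg (P := P) (X1 := X1) v) b
  rwa [ENNReal.ofReal_rpow_of_nonneg (lapT_nonneg u) ha,
    ENNReal.ofReal_rpow_of_nonneg (lapT_nonneg v) hb, ← ENNReal.ofReal_mul hu,
    ENNReal.ofReal_le_ofReal_iff (mul_nonneg hu hv)] at hH

lemma convexOn_cgfT [NeZero P] (hLap : ∀ u : E2, Integrable (fun ω => Real.exp ⟪u, X1 ω⟫) P) :
    ConvexOn ℝ univ (cgfT P X1) := by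
  refine ⟨convex_univ, fun u _ v _ a b ha hb hab => ?_⟩
  have hu := lapT_pos hLap u
  have hv := lapT_pos hLap v
  calc cgfT P X1 (a • u + b • v) ≤ Real.log (lapT P X1 u ^ a * lapT P X1 v ^ b) :=
        Real.log_le_log (lapT_pos hLap _) (lapT_smul_add_le hLap ha hb hab u v)
    _ = a • cgfT P X1 u + b • cgfT P X1 v := by
        rw [Real.log_mul (by positivity) (by positivity), Real.log_rpow hu, Real.log_rpow hv]
        rfl

lemma cgfT_zero [IsProbabilityMeasure P] : cgfT P X1 0 = 0 := by
  simp [cgfT, lapT]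

end CumulantGeneratingFunction

theorem minDirs_eq_maxDirs_general
    {Ω : Type*} [MeasurableSpace Ω] (P : Measure Ω) [IsProbabilityMeasure P]
    (X1 : Ω → E2)
    (hLap : ∀ u : E2, Integrable (fun ω => Real.exp ⟪u, X1 ω⟫) P)
    (r p : ℝ) (hp : 0 < p)
    (hderiv : HasDerivAt (barK P X1) r p) :
    minDirs P X1 r = maxDirs P X1 p :=
  argmin_fenchelConjENN_eq_argmax_of_hasDerivAt_radialMax (convexOn_cgfT hLap) cgfT_zero.le hp
    hderiv

/-- If `r ≥ |μ|`, `p > 0`, `bar K` is differentiable at `p` with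
`bar K'(p) = r`, then `ubar Λ_r = bar Λ_p`: the directions minimizing `I` on the circle of
radius `r` are exactly the directions maximizing `K` on the circle of radius `p`. -/
theorem minDirs_eq_maxDirs
    {Ω : Type*} [MeasurableSpace Ω] (P : Measure Ω) [IsProbabilityMeasure P]
    (X1 : Ω → E2) (hX : Measurable X1)
    (hLap : ∀ u : E2, Integrable (fun ω => Real.exp ⟪u, X1 ω⟫) P)
    (r p : ℝ) (hr : ‖meanv P X1‖ ≤ r) (hp : 0 < p)
    (hderiv : HasDerivAt (barK P X1) r p) :
    minDirs P X1 r = maxDirs P X1 p :=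
  minDirs_eq_maxDirs_general P X1 hLap r p hp hderiv

end
end
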